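/- Let ε_i, ε_j, ε_{j'} be three mutually independent random vectors in ℝ^p with i.i.d. N(0,σ²) coordinates, let c_{ij}, c_{ij'} ∈ ℝ^p be fixed vectors with c_{jj'} := c_{ij'} − c_{ij}, and set A_{ij} = ‖c_{ij} + ε_i − ε_j‖₂, A_{ij'} = ‖c_{ij'} + ε_i − ε_{j'}‖₂, λ_{ij} = ‖c_{ij}‖₂/(√2 σ), λ_{ij'} = ‖c_{ij'}‖₂/(√2 σ), λ_{jj'} = ‖c_{jj'}‖₂/(√2 σ). Then E(A_{ij}² A_{ij'}) ≥ −σ²(p + λ_{ij}² + λ_{ij'}² − λ_{jj'}²) − E(A_{ij'}). -/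

import Mathlib

open MeasureTheory ProbabilityTheory

/-- A family of random vectors in `ℝ^p` such that all coordinates (across the whole family)
are mutually independent and each coordinate is Gaussian `N(0, σ²)`. -/
def IIDGaussianCoords {Ω : Type*} [MeasurableSpace Ω] (P : Measure Ω)
    {ι : Type*} {p : ℕ} (σ : ℝ) (ε : ι → Ω → EuclideanSpace ℝ (Fin p)) : Prop :=
  (∀ i, Measurable (ε i)) ∧
  iIndepFun (fun q : ι × Fin p => fun ω => ε q.1 ω q.2) P ∧
  ∀ i k, Measure.map (fun ω => ε i ω k) P = gaussianReal 0 ⟨σ ^ 2, sq_nonneg σ⟩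

/-!
With `u = c_{ij} + ε_i - ε_j` and `w = c_{ij'} + ε_i - ε_{j'}`, the inequalities `A² ≥ A - 1` and
`‖u‖ ‖w‖ ≥ -⟪u, w⟫` give `‖u‖² ‖w‖ ≥ -⟪u, w⟫ - ‖w‖` pointwise. In `E⟪u, w⟫`, computed coordinate
by coordinate, independence kills every cross term and leaves `⟪c_{ij}, c_{ij'}⟫ + p σ²`, which
by polarization is `σ² (p + λ_{ij}² + λ_{ij'}² - λ_{jj'}²)`.
-/

section

variable {Ω : Type*} [MeasurableSpace Ω] {P : Measure Ω}

lemma MeasureTheory.MemLp.integrable_sq_norm_mul_norm {E F : Type*} [NormedAddCommGroup E]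
    [NormedAddCommGroup F] {u : Ω → E} {w : Ω → F} (hu : MemLp u 4 P) (hw : MemLp w 2 P) :
    Integrable (fun ω => ‖u ω‖ ^ 2 * ‖w ω‖) P := by
  have h42 : (4 : ENNReal) / 2 = 2 := by
    rw [eq_comm, ENNReal.eq_div_iff (by norm_num) (by norm_num)]; norm_num
  have hu2 : MemLp (fun ω => ‖u ω‖ ^ 2) 2 P := by simpa [h42] using hu.norm_rpow_div 2
  exact hu2.integrable_mul hw.norm

section InnerProductSpace

variable {E : Type*} [NormedAddCommGroup E] [InnerProductSpace ℝ E]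

lemma neg_inner_sub_norm_le_sq_norm_mul_norm (x y : E) :
    -inner ℝ x y - ‖y‖ ≤ ‖x‖ ^ 2 * ‖y‖ := by
  have hx : ‖x‖ - 1 ≤ ‖x‖ ^ 2 := by nlinarith [sq_nonneg (‖x‖ - 1)]
  have hxy : -inner ℝ x y ≤ ‖x‖ * ‖y‖ := (neg_le_abs _).trans (abs_real_inner_le_norm x y)
  nlinarith [norm_nonneg y]

lemma neg_integral_inner_sub_integral_norm_le [IsFiniteMeasure P] {u w : Ω → E}
    (hu : MemLp u 4 P) (hw : MemLp w 2 P) :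
    -∫ ω, inner ℝ (u ω) (w ω) ∂P - ∫ ω, ‖w ω‖ ∂P ≤ ∫ ω, ‖u ω‖ ^ 2 * ‖w ω‖ ∂P := by
  have hinner : Integrable (fun ω => inner ℝ (u ω) (w ω)) P :=
    ((hu.mono_exponent (p := 2) (by norm_num)).norm.integrable_mul hw.norm).mono'
      (hu.1.inner hw.1)
      (ae_of_all _ fun ω => by simpa using abs_real_inner_le_norm (u ω) (w ω))
  have hw1 : Integrable (fun ω => ‖w ω‖) P := hw.norm.integrable one_le_two
  calc -∫ ω, inner ℝ (u ω) (w ω) ∂P - ∫ ω, ‖w ω‖ ∂P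
      = ∫ ω, (-inner ℝ (u ω) (w ω) - ‖w ω‖) ∂P := by
        rw [integral_sub (f := fun ω => -inner ℝ (u ω) (w ω)) hinner.neg hw1, integral_neg]
    _ ≤ ∫ ω, ‖u ω‖ ^ 2 * ‖w ω‖ ∂P :=
        integral_mono (hinner.neg.sub hw1) (hu.integrable_sq_norm_mul_norm hw)
          fun ω => neg_inner_sub_norm_le_sq_norm_mul_norm (u ω) (w ω)

end InnerProductSpace

lemma integral_add_sub_mul_add_sub_of_indepFun [IsProbabilityMeasure P] {X Y Z : Ω → ℝ}
    (hX : MemLp X 2 P) (hY : MemLp Y 2 P) (hZ : MemLp Z 2 P)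
    (hXY : X ⟂ᵢ[P] Y) (hXZ : X ⟂ᵢ[P] Z) (hYZ : Y ⟂ᵢ[P] Z) (a b : ℝ) :
    ∫ ω, (a + X ω - Y ω) * (b + X ω - Z ω) ∂P
      = (a + P[X] - P[Y]) * (b + P[X] - P[Z]) + Var[X; P] := by
  have hXi : Integrable X P := hX.integrable one_le_two
  have hXa : MemLp (fun ω => a + X ω) 2 P := (memLp_const a).add hX
  have hXb : MemLp (fun ω => b + X ω) 2 P := (memLp_const b).add hX
  have hmean : ∀ (c : ℝ) (W : Ω → ℝ), MemLp W 2 P →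
      ∫ ω, (c + X ω - W ω) ∂P = c + P[X] - P[W] := fun c W hW => by
    rw [integral_sub (f := fun ω => c + X ω) ((integrable_const c).add hXi)
      (hW.integrable one_le_two), integral_add (integrable_const c) hXi]
    simp
  have hcov : cov[fun ω => a + X ω - Y ω, fun ω => b + X ω - Z ω; P] = Var[X; P] := by
    rw [covariance_fun_sub_fun_sub hXa hY hXb hZ, covariance_const_add_left hXi,
      covariance_const_add_right hXi, covariance_const_add_left hXi,
      covariance_const_add_right hXi, hXZ.covariance_eq_zero hX hZ,
      hYZ.covariance_eq_zero hY hZ, hXY.symm.covariance_eq_zero hY hX,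
      covariance_self hX.aemeasurable]
    ring
  rw [covariance_eq_sub (X := fun ω => a + X ω - Y ω) (Y := fun ω => b + X ω - Z ω)
    (hXa.sub hY) (hXb.sub hZ), hmean a Y hY, hmean b Z hZ] at hcov
  rw [← hcov]
  simp

namespace IIDGaussianCoords

variable {ι : Type*} {p : ℕ} {σ : ℝ} {ε : ι → Ω → EuclideanSpace ℝ (Fin p)}

lemma hasLaw_coord (h : IIDGaussianCoords P σ ε) (i : ι) (k : Fin p) :
    HasLaw (fun ω => ε i ω k) (gaussianReal 0 ⟨σ ^ 2, sq_nonneg σ⟩) P where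
  aemeasurable := by have := h.1 i; fun_prop
  map_eq := h.2.2 i k

lemma memLp_coord (h : IIDGaussianCoords P σ ε) (i : ι) (k : Fin p) {q : ENNReal}
    (hq : q ≠ ⊤) :
    MemLp (fun ω => ε i ω k) q P := by
  have hlaw := h.hasLaw_coord i k
  exact (memLp_map_measure_iff aestronglyMeasurable_id hlaw.aemeasurable).1
    (hlaw.map_eq ▸ memLp_id_gaussianReal' q hq)

lemma memLp (h : IIDGaussianCoords P σ ε) (i : ι) {q : ENNReal} (hq : q ≠ ⊤) :
    MemLp (ε i) q P :=
  MemLp.of_eval_piLp fun k => h.memLp_coord i k hq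

lemma integral_coord (h : IIDGaussianCoords P σ ε) (i : ι) (k : Fin p) :
    ∫ ω, ε i ω k ∂P = 0 :=
  (h.hasLaw_coord i k).integral_eq.trans integral_id_gaussianReal

lemma variance_coord (h : IIDGaussianCoords P σ ε) (i : ι) (k : Fin p) :
    Var[fun ω => ε i ω k; P] = σ ^ 2 :=
  (h.hasLaw_coord i k).variance_eq.trans variance_id_gaussianReal

lemma indepFun_coord (h : IIDGaussianCoords P σ ε) {i j : ι} (hij : i ≠ j) (k l : Fin p) :
    (fun ω => ε i ω k) ⟂ᵢ[P] (fun ω => ε j ω l) :=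
  h.2.1.indepFun (i := (i, k)) (j := (j, l)) (by simp [hij])

lemma integral_inner_add_sub_add_sub [IsProbabilityMeasure P] (h : IIDGaussianCoords P σ ε)
    {i j l : ι} (hij : i ≠ j) (hil : i ≠ l) (hjl : j ≠ l) (c c' : EuclideanSpace ℝ (Fin p)) :
    ∫ ω, inner ℝ (c + ε i ω - ε j ω) (c' + ε i ω - ε l ω) ∂P = inner ℝ c c' + p * σ ^ 2 := by
  have hL2 : ∀ m k, MemLp (fun ω => ε m ω k) 2 P := fun m k => h.memLp_coord m k (by simp)
  have hcoord : ∀ k, ∫ ω, (c k + ε i ω k - ε j ω k) * (c' k + ε i ω k - ε l ω k) ∂P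
      = c k * c' k + σ ^ 2 := fun k => by
    rw [integral_add_sub_mul_add_sub_of_indepFun (hL2 i k) (hL2 j k) (hL2 l k)
      (h.indepFun_coord hij k k) (h.indepFun_coord hil k k) (h.indepFun_coord hjl k k),
      h.integral_coord, h.integral_coord, h.integral_coord, h.variance_coord]
    ring
  have hU : ∀ (a : ℝ) m k, MemLp (fun ω => a + ε i ω k - ε m ω k) 2 P := fun a m k =>
    ((memLp_const a).add (hL2 i k)).sub (hL2 m k)
  have hint : ∀ k, Integrable
      (fun ω => (c k + ε i ω k - ε j ω k) * (c' k + ε i ω k - ε l ω k)) P := fun k =>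
    (hU (c k) j k).integrable_mul (hU (c' k) l k)
  have hinner : ∀ x y : EuclideanSpace ℝ (Fin p), inner ℝ x y = ∑ k, x k * y k := fun x y => by
    simp [PiLp.inner_apply, mul_comm]
  simp_rw [hinner]
  rw [integral_finsetSum _ fun k _ => by simpa using hint k]
  simp [hcoord, Finset.sum_add_distrib]

end IIDGaussianCoords

end

theorem stmt_10_general {Ω : Type*} [MeasurableSpace Ω] (P : Measure Ω) [IsProbabilityMeasure P]
    (p : ℕ) (σ : ℝ) (hσ : 0 < σ)
    (ε : Fin 3 → Ω → EuclideanSpace ℝ (Fin p))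
    (hiid : IIDGaussianCoords P σ ε)
    (cij cij' : EuclideanSpace ℝ (Fin p)) :
    ∫ ω, ‖cij + ε 0 ω - ε 1 ω‖ ^ 2 * ‖cij' + ε 0 ω - ε 2 ω‖ ∂P
      ≥ -(σ ^ 2) * (p + (‖cij‖ / (Real.sqrt 2 * σ)) ^ 2
            + (‖cij'‖ / (Real.sqrt 2 * σ)) ^ 2 - (‖cij' - cij‖ / (Real.sqrt 2 * σ)) ^ 2)
        - ∫ ω, ‖cij' + ε 0 ω - ε 2 ω‖ ∂P := by
  have hu : MemLp (fun ω => cij + ε 0 ω - ε 1 ω) 4 P :=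
    ((memLp_const cij).add (hiid.memLp 0 (by simp))).sub (hiid.memLp 1 (by simp))
  have hw : MemLp (fun ω => cij' + ε 0 ω - ε 2 ω) 2 P :=
    ((memLp_const cij').add (hiid.memLp 0 (by simp))).sub (hiid.memLp 2 (by simp))
  have hbound := neg_integral_inner_sub_integral_norm_le hu hw
  rw [hiid.integral_inner_add_sub_add_sub (by decide) (by decide) (by decide)] at hbound
  have hrhs : σ ^ 2 * (p + (‖cij‖ / (Real.sqrt 2 * σ)) ^ 2
      + (‖cij'‖ / (Real.sqrt 2 * σ)) ^ 2 - (‖cij' - cij‖ / (Real.sqrt 2 * σ)) ^ 2)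
      = inner ℝ cij cij' + p * σ ^ 2 := by
    rw [div_pow, div_pow, div_pow, mul_pow, Real.sq_sqrt zero_le_two, norm_sub_sq_real,
      real_inner_comm]
    field_simp
    ring
  rw [ge_iff_le, neg_mul, hrhs]
  exact hbound

theorem stmt_10 {Ω : Type*} [MeasurableSpace Ω] (P : Measure Ω) [IsProbabilityMeasure P]
    (p : ℕ) (hp : 1 ≤ p) (σ : ℝ) (hσ : 0 < σ)
    (ε : Fin 3 → Ω → EuclideanSpace ℝ (Fin p))
    (hiid : IIDGaussianCoords P σ ε)
    (cij cij' : EuclideanSpace ℝ (Fin p)) :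
    ∫ ω, ‖cij + ε 0 ω - ε 1 ω‖ ^ 2 * ‖cij' + ε 0 ω - ε 2 ω‖ ∂P
      ≥ -(σ ^ 2) * (p + (‖cij‖ / (Real.sqrt 2 * σ)) ^ 2
            + (‖cij'‖ / (Real.sqrt 2 * σ)) ^ 2 - (‖cij' - cij‖ / (Real.sqrt 2 * σ)) ^ 2)
        - ∫ ω, ‖cij' + ε 0 ω - ε 2 ω‖ ∂P :=
  stmt_10_general P p σ hσ ε hiid cij cij'
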